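/- A subset A of a Euclidean space is nearly convex if and only if A is nearly equal to its convex hull (A ≈ conv A). -/

import Mathlib

/-!
If `C ⊆ A ⊆ closure C` with `C` convex, then also `C ⊆ conv A ⊆ closure C`, and any set
squeezed between a convex set and its closure has the same closure and, because the affine spans
agree and `ri (closure C) = ri C`, the same relative interior as `C`. Conversely, `ri (conv A)` is
a convex subset of `ri A ⊆ A` that is dense in `closure (conv A) = closure A`.
The facts on relative interiors of convex sets are pulled back, along an affine isometry from the
direction of the affine span, to interiors of convex sets with nonempty interior.
-/

open Set

variable {X : Type*} [NormedAddCommGroup X] [InnerProductSpace ℝ X] [FiniteDimensional ℝ X]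

def NearlyEqual (A B : Set X) : Prop :=
  closure A = closure B ∧ intrinsicInterior ℝ A = intrinsicInterior ℝ B

def NearlyConvex (A : Set X) : Prop :=
  ∃ C : Set X, Convex ℝ C ∧ C ⊆ A ∧ A ⊆ closure C

theorem closure_eq_of_subset_of_subset_closure {α : Type*} [TopologicalSpace α] {s t : Set α}
    (hst : s ⊆ t) (hts : t ⊆ closure s) : closure t = closure s :=
  subset_antisymm (closure_minimal hts isClosed_closure) (closure_mono hst)

section
variable {𝕜 V P : Type*} [Ring 𝕜] [AddCommGroup V] [Module 𝕜 V] [TopologicalSpace P]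
  [AddTorsor V P] {s t : Set P}

theorem intrinsicInterior_eq_interior_of_affineSpan_eq_top (h : affineSpan 𝕜 s = ⊤) :
    intrinsicInterior 𝕜 s = interior s := by
  rw [intrinsicInterior, h]
  exact ((Homeomorph.Set.univ P).isHomeomorph.image_interior _).trans (by congr 1; ext x; simp)

theorem intrinsicInterior_mono_of_affineSpan_eq (hst : s ⊆ t)
    (h : affineSpan 𝕜 s = affineSpan 𝕜 t) :
    intrinsicInterior 𝕜 s ⊆ intrinsicInterior 𝕜 t := by
  rw [intrinsicInterior, intrinsicInterior, h]
  exact image_mono (interior_mono (preimage_mono hst))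
end

section
variable {E : Type*} [NormedAddCommGroup E] [NormedSpace ℝ E] {C A : Set E}

theorem intrinsicInterior_eq_interior_of_nonempty_interior (h : (interior C).Nonempty) :
    intrinsicInterior ℝ C = interior C :=
  intrinsicInterior_eq_interior_of_affineSpan_eq_top <| top_unique <|
    isOpen_interior.affineSpan_eq_top h ▸ affineSpan_mono ℝ interior_subset

variable [FiniteDimensional ℝ E]

theorem Convex.exists_affineIsometry_image_eq (hC : Convex ℝ C) (hne : C.Nonempty) :
    ∃ (ψ : (affineSpan ℝ C).direction →ᵃⁱ[ℝ] E) (D : Set (affineSpan ℝ C).direction),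
      Convex ℝ D ∧ (interior D).Nonempty ∧ ψ '' D = C := by
  have : Nonempty C := hne.to_subtype
  obtain ⟨p, hp⟩ := hne
  let q : affineSpan ℝ C := ⟨p, subset_affineSpan ℝ C hp⟩
  have : Nonempty (affineSpan ℝ C) := ⟨q⟩
  let e := (AffineIsometryEquiv.constVSub ℝ q).symm
  let ψ := (affineSpan ℝ C).subtypeₐᵢ.comp e.toAffineIsometry
  have hD : Convex ℝ (ψ ⁻¹' C) := hC.affine_preimage ψ.toAffineMap
  have hspan : affineSpan ℝ (ψ ⁻¹' C) = ⊤ := by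
    change affineSpan ℝ (e ⁻¹' ((↑) ⁻¹' C)) = ⊤
    rw [← AffineIsometryEquiv.coe_toAffineEquiv, ← AffineSubspace.comap_span,
      affineSpan_coe_preimage_eq_top, AffineSubspace.comap_top]
  refine ⟨ψ, ψ ⁻¹' C, hD, hD.interior_nonempty_iff_affineSpan_eq_top.2 hspan,
    image_preimage_eq_of_subset fun x hx => ?_⟩
  exact ⟨e.symm ⟨x, subset_affineSpan ℝ C hx⟩, by simp [ψ]⟩

protected theorem Convex.intrinsicInterior (hC : Convex ℝ C) :
    Convex ℝ (intrinsicInterior ℝ C) := by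
  rcases C.eq_empty_or_nonempty with rfl | hne
  · rw [intrinsicInterior_empty]
    exact convex_empty
  obtain ⟨ψ, D, hD, hDint, hψD⟩ := hC.exists_affineIsometry_image_eq hne
  rw [← hψD, ψ.intrinsicInterior_image, intrinsicInterior_eq_interior_of_nonempty_interior hDint]
  exact hD.interior.affine_image ψ.toAffineMap

theorem Convex.closure_intrinsicInterior (hC : Convex ℝ C) :
    closure (intrinsicInterior ℝ C) = closure C := by
  rcases C.eq_empty_or_nonempty with rfl | hne
  · simp
  obtain ⟨ψ, D, hD, hDint, hψD⟩ := hC.exists_affineIsometry_image_eq hne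
  have hψ := ψ.isometry.isClosedEmbedding
  rw [← hψD, ψ.intrinsicInterior_image, intrinsicInterior_eq_interior_of_nonempty_interior hDint,
    hψ.closure_image_eq, hψ.closure_image_eq,
    hD.closure_interior_eq_closure_of_nonempty_interior hDint]

theorem Convex.intrinsicInterior_closure (hC : Convex ℝ C) :
    intrinsicInterior ℝ (closure C) = intrinsicInterior ℝ C := by
  rcases C.eq_empty_or_nonempty with rfl | hne
  · simp
  obtain ⟨ψ, D, hD, hDint, hψD⟩ := hC.exists_affineIsometry_image_eq hne
  rw [← hψD, ψ.isometry.isClosedEmbedding.closure_image_eq, ψ.intrinsicInterior_image,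
    ψ.intrinsicInterior_image, intrinsicInterior_eq_interior_of_nonempty_interior hDint,
    intrinsicInterior_eq_interior_of_nonempty_interior (hDint.mono (interior_mono subset_closure)),
    hD.interior_closure_eq_interior_of_nonempty_interior hDint]

theorem affineSpan_closure (C : Set E) : affineSpan ℝ (closure C) = affineSpan ℝ C :=
  le_antisymm (affineSpan_le.2 <| closure_minimal (subset_affineSpan ℝ C)
    (affineSpan ℝ C).closed_of_finiteDimensional) (affineSpan_mono ℝ subset_closure)

theorem Convex.intrinsicInterior_eq_of_subset_of_subset_closure (hC : Convex ℝ C) (hCA : C ⊆ A)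
    (hAC : A ⊆ closure C) : intrinsicInterior ℝ A = intrinsicInterior ℝ C := by
  have hspanA : affineSpan ℝ A = affineSpan ℝ C :=
    le_antisymm (affineSpan_closure C ▸ affineSpan_mono ℝ hAC) (affineSpan_mono ℝ hCA)
  refine subset_antisymm ?_ (intrinsicInterior_mono_of_affineSpan_eq hCA hspanA.symm)
  calc intrinsicInterior ℝ A ⊆ intrinsicInterior ℝ (closure C) :=
        intrinsicInterior_mono_of_affineSpan_eq hAC (hspanA.trans (affineSpan_closure C).symm)
    _ = intrinsicInterior ℝ C := hC.intrinsicInterior_closure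
end

theorem nearlyConvex_iff_nearlyEqual_convexHull (A : Set X) :
    NearlyConvex A ↔ NearlyEqual A (convexHull ℝ A) := by
  constructor
  · rintro ⟨C, hC, hCA, hAC⟩
    have hCH : C ⊆ convexHull ℝ A := hCA.trans (subset_convexHull ℝ A)
    have hHC : convexHull ℝ A ⊆ closure C := convexHull_min hAC hC.closure
    exact ⟨(closure_eq_of_subset_of_subset_closure hCA hAC).trans
        (closure_eq_of_subset_of_subset_closure hCH hHC).symm,
      (hC.intrinsicInterior_eq_of_subset_of_subset_closure hCA hAC).trans
        (hC.intrinsicInterior_eq_of_subset_of_subset_closure hCH hHC).symm⟩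
  · rintro ⟨hcl, hri⟩
    have hH : Convex ℝ (convexHull ℝ A) := convex_convexHull ℝ A
    refine ⟨intrinsicInterior ℝ (convexHull ℝ A), hH.intrinsicInterior,
      hri ▸ intrinsicInterior_subset, ?_⟩
    rw [hH.closure_intrinsicInterior, ← hcl]
    exact subset_closure
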